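/- Let N(k,ω) = α₂(ρ₁/ρ₂)cos(α₁H₁)sin(α₂H₂) + α₁ sin(α₁H₁)cos(α₂H₂) with α_j = sqrt(ω²/c_j² − k²), all parameters positive. For fixed real ω > 0, the set of real k ≥ 0 with N(k,ω) = 0 is finite. -/

import Mathlib

open Complex

noncomputable def alphaC (c k ω : ℝ) : ℂ :=
  ((ω ^ 2 / c ^ 2 - k ^ 2 : ℝ) : ℂ) ^ (1 / 2 : ℂ)

noncomputable def Ndisp (H₁ H₂ ρ₁ ρ₂ c₁ c₂ : ℝ) (k ω : ℝ) : ℂ :=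
  alphaC c₂ k ω * ((ρ₁ : ℂ) / (ρ₂ : ℂ)) * Complex.cos (alphaC c₁ k ω * H₁) *
      Complex.sin (alphaC c₂ k ω * H₂) +
    alphaC c₁ k ω * Complex.sin (alphaC c₁ k ω * H₁) *
      Complex.cos (alphaC c₂ k ω * H₂)

/-!
`cos (α H)` and `α sin (α H)` are even entire functions of `α`, hence entire functions of `α²`;
so, whatever branch of the square root defines `α_j`, `N(k, ω) = F(k²)` for an entire function
`F`, and `k ↦ F(k²)` is real analytic on all of `ℝ`. Once `k² > ω²/c_j²` for both `j`, the
`α_j` are purely imaginary, `cos` and `sin` turn into `cosh` and `sinh`, and `N(k, ω)` is a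
negative real number. Thus the zeros with `k ≥ 0` lie in a compact interval, and being zeros of
an analytic function that does not vanish identically, there are finitely many of them.
-/

open scoped Nat
open Filter Set FormalMultilinearSeries

theorem AnalyticOnNhd.finite_inter_preimage_zero_of_isCompact {𝕜 E : Type*}
    [NontriviallyNormedField 𝕜] [PreconnectedSpace 𝕜] [NormedAddCommGroup E] [NormedSpace 𝕜 E]
    {f : 𝕜 → E}
    (hf : AnalyticOnNhd 𝕜 f univ) (hf0 : ∃ x, f x ≠ 0) {K : Set 𝕜} (hK : IsCompact K) :
    (K ∩ f ⁻¹' {0}).Finite := by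
  obtain h | h := hf.eqOn_zero_or_eventually_ne_zero_of_preconnected isPreconnected_univ
  · obtain ⟨x, hx⟩ := hf0
    exact absurd (h (mem_univ x)) hx
  · convert hK.finite_sdiff_of_mem_codiscreteWithin (codiscreteWithin_mono (subset_univ K) h)
    using 1
    ext x
    simp

theorem FormalMultilinearSeries.ofScalars_radius_eq_top_of_norm_le_inv_factorial
    {𝕜 E : Type*} [NontriviallyNormedField 𝕜] [NormedRing E] [NormedAlgebra 𝕜 E]
    [NormOneClass E] {c : ℕ → 𝕜} (hc : ∀ n, ‖c n‖ ≤ (n ! : ℝ)⁻¹) :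
    (ofScalars E c).radius = ⊤ := by
  refine radius_eq_top_of_summable_norm _ fun r ↦ ?_
  refine .of_nonneg_of_le (fun n ↦ by positivity) (fun n ↦ ?_) (Real.summable_pow_div_factorial r)
  rw [ofScalars_norm, div_eq_inv_mul]
  exact mul_le_mul_of_nonneg_right (hc n) (by positivity)

theorem FormalMultilinearSeries.analyticOnNhd_ofScalarsSum_of_norm_le_inv_factorial
    {𝕜 E : Type*} [NontriviallyNormedField 𝕜] [NormedRing E] [NormedAlgebra 𝕜 E]
    [NormOneClass E] [CompleteSpace E] {c : ℕ → 𝕜} (hc : ∀ n, ‖c n‖ ≤ (n ! : ℝ)⁻¹) :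
    AnalyticOnNhd 𝕜 (ofScalarsSum (E := E) c) univ := by
  have hr := ofScalars_radius_eq_top_of_norm_le_inv_factorial (E := E) hc
  simpa [hr, ofScalarsSum] using
    ((ofScalars E c).hasFPowerSeriesOnBall (by simp [hr])).analyticOnNhd

theorem norm_neg_one_pow_div_factorial_le {n m : ℕ} (h : n ≤ m) :
    ‖(-1 : ℂ) ^ n / (m ! : ℂ)‖ ≤ (n ! : ℝ)⁻¹ := by
  rw [norm_div, norm_pow, norm_neg, norm_one, one_pow, Complex.norm_natCast, one_div]
  exact inv_anti₀ (by positivity) (by exact_mod_cast Nat.factorial_le h)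

noncomputable def cosSqrt : ℂ → ℂ := ofScalarsSum fun n ↦ (-1 : ℂ) ^ n / (2 * n)!

noncomputable def sincSqrt : ℂ → ℂ := ofScalarsSum fun n ↦ (-1 : ℂ) ^ n / (2 * n + 1)!

theorem differentiable_cosSqrt : Differentiable ℂ cosSqrt := fun z ↦
  (analyticOnNhd_ofScalarsSum_of_norm_le_inv_factorial
    (fun n ↦ norm_neg_one_pow_div_factorial_le (by omega)) z (mem_univ z)).differentiableAt

theorem differentiable_sincSqrt : Differentiable ℂ sincSqrt := fun z ↦
  (analyticOnNhd_ofScalarsSum_of_norm_le_inv_factorial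
    (fun n ↦ norm_neg_one_pow_div_factorial_le (by omega)) z (mem_univ z)).differentiableAt

theorem cosSqrt_sq (w : ℂ) : cosSqrt (w ^ 2) = cos w := by
  rw [cosSqrt, ofScalars_sum_eq, ← (hasSum_cos w).tsum_eq]
  refine tsum_congr fun n ↦ ?_
  rw [smul_eq_mul, ← pow_mul]
  ring

theorem mul_sincSqrt_sq (w : ℂ) : w * sincSqrt (w ^ 2) = sin w := by
  rw [sincSqrt, ofScalars_sum_eq, ← tsum_mul_left, ← (hasSum_sin w).tsum_eq]
  refine tsum_congr fun n ↦ ?_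
  rw [smul_eq_mul, ← pow_mul]
  ring

noncomputable def cosOfSq (H u : ℂ) : ℂ := cosSqrt (u * H ^ 2)

noncomputable def mulSinOfSq (H u : ℂ) : ℂ := H * u * sincSqrt (u * H ^ 2)

theorem cosOfSq_sq (H α : ℂ) : cosOfSq H (α ^ 2) = cos (α * H) := by
  rw [cosOfSq, ← mul_pow, cosSqrt_sq]

theorem mulSinOfSq_sq (H α : ℂ) : mulSinOfSq H (α ^ 2) = α * sin (α * H) := by
  rw [mulSinOfSq, ← mul_pow, ← mul_sincSqrt_sq]
  ring

theorem neg_sq_eq_mul_I_sq (t : ℂ) : -t ^ 2 = (t * I) ^ 2 := by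
  rw [mul_pow, I_sq]
  ring

theorem cosOfSq_neg_sq (H t : ℂ) : cosOfSq H (-t ^ 2) = cosh (t * H) := by
  rw [neg_sq_eq_mul_I_sq, cosOfSq_sq, mul_right_comm t I H, cos_mul_I]

theorem mulSinOfSq_neg_sq (H t : ℂ) : mulSinOfSq H (-t ^ 2) = -(t * sinh (t * H)) := by
  rw [neg_sq_eq_mul_I_sq, mulSinOfSq_sq, mul_right_comm t I H, sin_mul_I]
  linear_combination t * sinh (t * H) * I_sq

@[fun_prop]
theorem differentiable_cosOfSq (H : ℂ) : Differentiable ℂ (cosOfSq H) :=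
  differentiable_cosSqrt.comp (differentiable_id.mul_const _)

@[fun_prop]
theorem differentiable_mulSinOfSq (H : ℂ) : Differentiable ℂ (mulSinOfSq H) :=
  (differentiable_id.const_mul H).mul (differentiable_sincSqrt.comp (differentiable_id.mul_const _))

noncomputable def NdispOfSq (H₁ H₂ ρ₁ ρ₂ c₁ c₂ ω : ℝ) (z : ℂ) : ℂ :=
  (ρ₁ : ℂ) / ρ₂ * cosOfSq H₁ ((ω ^ 2 / c₁ ^ 2 : ℝ) - z) *
      mulSinOfSq H₂ ((ω ^ 2 / c₂ ^ 2 : ℝ) - z) +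
    mulSinOfSq H₁ ((ω ^ 2 / c₁ ^ 2 : ℝ) - z) * cosOfSq H₂ ((ω ^ 2 / c₂ ^ 2 : ℝ) - z)

theorem alphaC_sq (c k ω : ℝ) : alphaC c k ω ^ 2 = (ω ^ 2 / c ^ 2 : ℝ) - (k : ℂ) ^ 2 := by
  rw [alphaC, one_div, cpow_ofNat_inv_pow]
  push_cast
  ring

theorem Ndisp_eq_NdispOfSq (H₁ H₂ ρ₁ ρ₂ c₁ c₂ k ω : ℝ) :
    Ndisp H₁ H₂ ρ₁ ρ₂ c₁ c₂ k ω = NdispOfSq H₁ H₂ ρ₁ ρ₂ c₁ c₂ ω ((k : ℂ) ^ 2) := by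
  rw [NdispOfSq, ← alphaC_sq, ← alphaC_sq, cosOfSq_sq, cosOfSq_sq, mulSinOfSq_sq, mulSinOfSq_sq,
    Ndisp]
  ring

theorem differentiable_NdispOfSq (H₁ H₂ ρ₁ ρ₂ c₁ c₂ ω : ℝ) :
    Differentiable ℂ (NdispOfSq H₁ H₂ ρ₁ ρ₂ c₁ c₂ ω) := by
  unfold NdispOfSq
  fun_prop

theorem exists_pos_ofReal_sub_eq_neg_sq {a x : ℝ} (h : a < x) :
    ∃ t : ℝ, 0 < t ∧ (a : ℂ) - x = -(t : ℂ) ^ 2 :=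
  ⟨√(x - a), Real.sqrt_pos.2 (sub_pos.2 h), by
    rw [← ofReal_pow, Real.sq_sqrt (sub_pos.2 h).le]; push_cast; ring⟩

theorem NdispOfSq_ofReal_ne_zero {H₁ H₂ ρ₁ ρ₂ c₁ c₂ ω x : ℝ} (hH₁ : 0 < H₁) (hH₂ : 0 < H₂)
    (hρ₁ : 0 < ρ₁) (hρ₂ : 0 < ρ₂) (h₁ : ω ^ 2 / c₁ ^ 2 < x) (h₂ : ω ^ 2 / c₂ ^ 2 < x) :
    NdispOfSq H₁ H₂ ρ₁ ρ₂ c₁ c₂ ω x ≠ 0 := by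
  obtain ⟨t₁, ht₁, e₁⟩ := exists_pos_ofReal_sub_eq_neg_sq h₁
  obtain ⟨t₂, ht₂, e₂⟩ := exists_pos_ofReal_sub_eq_neg_sq h₂
  have hval : NdispOfSq H₁ H₂ ρ₁ ρ₂ c₁ c₂ ω x =
      -((ρ₁ / ρ₂ * Real.cosh (t₁ * H₁) * (t₂ * Real.sinh (t₂ * H₂)) +
        t₁ * Real.sinh (t₁ * H₁) * Real.cosh (t₂ * H₂) : ℝ) : ℂ) := by
    rw [NdispOfSq, e₁, e₂, cosOfSq_neg_sq, cosOfSq_neg_sq, mulSinOfSq_neg_sq, mulSinOfSq_neg_sq]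
    push_cast
    ring
  rw [hval, neg_ne_zero, ofReal_ne_zero]
  positivity

theorem Ndisp_roots_finite_general (H₁ H₂ ρ₁ ρ₂ c₁ c₂ ω : ℝ)
    (hH₁ : 0 < H₁) (hH₂ : 0 < H₂) (hρ₁ : 0 < ρ₁) (hρ₂ : 0 < ρ₂) :
    {k : ℝ | 0 ≤ k ∧ Ndisp H₁ H₂ ρ₁ ρ₂ c₁ c₂ k ω = 0}.Finite := by
  set g : ℝ → ℂ := fun k ↦ NdispOfSq H₁ H₂ ρ₁ ρ₂ c₁ c₂ ω ((k : ℂ) ^ 2)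
  set R := max (ω ^ 2 / c₁ ^ 2) (ω ^ 2 / c₂ ^ 2) + 1
  have hg_ne : ∀ k, R < k → g k ≠ 0 := by
    intro k hk
    have hR : max (ω ^ 2 / c₁ ^ 2) (ω ^ 2 / c₂ ^ 2) < k ^ 2 := by
      nlinarith [le_max_left (ω ^ 2 / c₁ ^ 2) (ω ^ 2 / c₂ ^ 2),
        div_nonneg (sq_nonneg ω) (sq_nonneg c₁)]
    simpa only [g, ofReal_pow] using NdispOfSq_ofReal_ne_zero hH₁ hH₂ hρ₁ hρ₂
      (le_max_left _ _ |>.trans_lt hR) (le_max_right _ _ |>.trans_lt hR)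
  have hg : AnalyticOnNhd ℝ g univ := fun k _ ↦
    ((differentiable_NdispOfSq _ _ _ _ _ _ _).analyticAt _).restrictScalars.comp
      ((ofRealCLM.analyticAt k).pow 2)
  refine (hg.finite_inter_preimage_zero_of_isCompact ⟨R + 1, hg_ne _ (lt_add_one R)⟩
    (isCompact_Icc (a := 0) (b := R))).subset ?_
  rintro k ⟨hk₀, hk⟩
  rw [Ndisp_eq_NdispOfSq] at hk
  exact ⟨⟨hk₀, not_lt.1 fun hRk ↦ hg_ne k hRk hk⟩, hk⟩

/-- For fixed `ω > 0`, the set of nonnegative real roots `k` of the dispersion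
equation `N(k,ω) = 0` is finite. -/
theorem Ndisp_roots_finite (H₁ H₂ ρ₁ ρ₂ c₁ c₂ ω : ℝ)
    (hH₁ : 0 < H₁) (hH₂ : 0 < H₂) (hρ₁ : 0 < ρ₁) (hρ₂ : 0 < ρ₂)
    (hc₁ : 0 < c₁) (hc₂ : 0 < c₂) (hω : 0 < ω) :
    {k : ℝ | 0 ≤ k ∧ Ndisp H₁ H₂ ρ₁ ρ₂ c₁ c₂ k ω = 0}.Finite :=
  Ndisp_roots_finite_general H₁ H₂ ρ₁ ρ₂ c₁ c₂ ω hH₁ hH₂ hρ₁ hρ₂
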